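/- arXiv:2312.14881 — 5 statements merged into one kernel-verified Lean document; each statement's English description precedes it below -/
import Mathlib

section
/- For all integers s, t ≥ 1, the complete multipartite graph K_{s,t,s,t} with four parts, two of size s and two of size t alternating, is interval colorable, i.e., μ_int(K_{s,t,s,t}) = 1. -/
/-!
Number the vertices of each part from `0` and color the edge between vertex `a` of part `i` and
vertex `b` of part `j` by `a + b + d`, where `d = 0` for the pairs of parts `{0,1}` and `{2,3}`,
`d = t` for `{0,2}`, `d = s` for `{1,3}` and `d = s + t` for `{0,3}` and `{1,2}`. Seen from
vertex `a` of any part, the three other parts then receive disjoint consecutive blocks of colors,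
all inside `[a, a + deg)`. The colors at a vertex are therefore distinct, and since there are
`deg` of them they fill this interval.
-/

/-- An (improper) interval edge coloring: for every vertex, the set of colors on
incident edges forms an interval of consecutive integers. -/
def IsIntervalColoring {V : Type*} (G : SimpleGraph V) (c : Sym2 V → ℤ) : Prop :=
  ∀ v : V, ∀ a b x : ℤ,
    (∃ u, G.Adj v u ∧ c s(v, u) = a) → (∃ u, G.Adj v u ∧ c s(v, u) = b) →
    a ≤ x → x ≤ b → ∃ u, G.Adj v u ∧ c s(v, u) = x

/-- A coloring is `k`-improper if at every vertex each color appears on at most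
`k` incident edges. -/
def IsKImproper {V : Type*} (G : SimpleGraph V) (c : Sym2 V → ℤ) (k : ℕ) : Prop :=
  ∀ v : V, ∀ q : ℤ, ({u : V | G.Adj v u ∧ c s(v, u) = q}).ncard ≤ k

/-- The interval coloring impropriety `μ_int(G)`: the least `k` such that `G`
admits a `k`-improper interval edge coloring. -/
noncomputable def impropriety {V : Type*} (G : SimpleGraph V) : ℕ :=
  sInf {k : ℕ | ∃ c : Sym2 V → ℤ, IsIntervalColoring G c ∧ IsKImproper G c k}

/-- The maximum degree of a graph. -/
noncomputable def maxDeg {V : Type*} (G : SimpleGraph V) : ℕ :=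
  sSup {d : ℕ | ∃ v : V, (G.neighborSet v).ncard = d}

/-- The complete multipartite graph `K_{s,t,s,t}` with four parts, of sizes
`s, t, s, t` alternating. -/
abbrev Kstst (s t : ℕ) : SimpleGraph (Σ i : Fin 4, Fin (if i.val % 2 = 0 then s else t)) :=
  SimpleGraph.completeMultipartiteGraph fun i : Fin 4 => Fin (if i.val % 2 = 0 then s else t)

section IntervalColoring

variable {V : Type*} {G : SimpleGraph V} {c : Sym2 V → ℤ}

lemma isIntervalColoring_of_ordConnected
    (h : ∀ v, ((fun u => c s(v, u)) '' G.neighborSet v).OrdConnected) :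
    IsIntervalColoring G c := by
  intro v a b x ha hb hax hxb
  simpa using (h v).out (by simpa using ha) (by simpa using hb) ⟨hax, hxb⟩

lemma isKImproper_one_of_injOn (h : ∀ v, (G.neighborSet v).InjOn fun u => c s(v, u)) :
    IsKImproper G c 1 := by
  intro v q
  have hsub : {u | G.Adj v u ∧ c s(v, u) = q}.Subsingleton :=
    fun u hu w hw => h v hu.1 hw.1 (hu.2.trans hw.2.symm)
  exact (Set.ncard_le_one hsub.finite).2 fun u hu w hw => hsub hu hw

lemma impropriety_eq_one [Finite V] (hc : IsIntervalColoring G c) (hproper : IsKImproper G c 1)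
    {u v : V} (huv : G.Adj u v) : impropriety G = 1 := by
  have h1 : 1 ∈ {k : ℕ | ∃ c : Sym2 V → ℤ, IsIntervalColoring G c ∧ IsKImproper G c k} :=
    ⟨c, hc, hproper⟩
  unfold impropriety
  refine le_antisymm (Nat.sInf_le h1) (Nat.one_le_iff_ne_zero.2 fun h0 => ?_)
  obtain ⟨c', -, h0'⟩ :=
    (Nat.sInf_eq_zero.1 h0).resolve_right (Set.nonempty_of_mem h1).ne_empty
  have hv : v ∈ {w | G.Adj u w ∧ c' s(u, w) = c' s(u, v)} := ⟨huv, rfl⟩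
  exact ((Set.ncard_pos (Set.toFinite _)).2 ⟨v, hv⟩).ne' (Nat.le_zero.1 (h0' u _))

end IntervalColoring

lemma Set.InjOn.image_eq_Ico_of_ncard_eq {α : Type*} {f : α → ℤ} {s : Set α} {lo : ℤ} {n : ℕ}
    (hf : s.InjOn f) (hmaps : s.MapsTo f (Set.Ico lo (lo + n))) (hcard : s.ncard = n) :
    f '' s = Set.Ico lo (lo + n) := by
  refine Set.eq_of_subset_of_ncard_le hmaps.image_subset ?_
  rw [hf.ncard_image, hcard, ← Finset.coe_Ico, Set.ncard_coe_finset, Int.card_Ico]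
  simp

lemma SimpleGraph.ncard_neighborSet_completeMultipartiteGraph {ι : Type*} {β : ι → Type*}
    [Finite ι] [∀ i, Finite (β i)] (v : Σ i, β i) :
    ((completeMultipartiteGraph β).neighborSet v).ncard =
      Nat.card (Σ i, β i) - Nat.card (β v.1) := by
  have hnbr : (completeMultipartiteGraph β).neighborSet v = (Set.range (Sigma.mk v.1))ᶜ := by
    ext ⟨j, b⟩
    simp [completeMultipartiteGraph, eq_comm]
  rw [hnbr, Set.ncard_compl, Set.ncard_range_of_injective sigma_mk_injective]

-- Evaluated at `i + j`: the sums `1, 2, 3, 4, 5` come from the pairs of parts `{0,1}`, `{0,2}`,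
-- `{0,3}` or `{1,2}`, `{1,3}`, `{2,3}`.
def ststOffset (s t : ℕ) : ℕ → ℕ
  | 2 => t
  | 3 => s + t
  | 4 => s
  | _ => 0

def ststColoring (s t : ℕ) : Sym2 (Σ i : Fin 4, Fin (if i.val % 2 = 0 then s else t)) → ℤ :=
  Sym2.lift ⟨fun u v => (u.2.val + v.2.val + ststOffset s t (u.1.val + v.1.val) : ℕ),
    fun u v => by dsimp only; rw [Nat.add_comm u.2.val, Nat.add_comm u.1.val]⟩

lemma add_ststOffset_lt {s t i j b : ℕ} (hi : i < 4) (hj : j < 4) (hij : i ≠ j)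
    (hb : b < if j % 2 = 0 then s else t) :
    b + ststOffset s t (i + j) + (if i % 2 = 0 then s else t) < 2 * s + 2 * t := by
  interval_cases i <;> interval_cases j <;> simp_all [ststOffset] <;> omega

lemma add_ststOffset_inj {s t i j₁ j₂ b₁ b₂ : ℕ} (hi : i < 4) (hj₁ : j₁ < 4) (hj₂ : j₂ < 4)
    (hij₁ : i ≠ j₁) (hij₂ : i ≠ j₂)
    (hb₁ : b₁ < if j₁ % 2 = 0 then s else t) (hb₂ : b₂ < if j₂ % 2 = 0 then s else t)
    (h : b₁ + ststOffset s t (i + j₁) = b₂ + ststOffset s t (i + j₂)) :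
    j₁ = j₂ ∧ b₁ = b₂ := by
  interval_cases i <;> interval_cases j₁ <;> interval_cases j₂ <;>
    simp_all [ststOffset] <;> omega

section Kstst

variable {s t : ℕ} (v : Σ i : Fin 4, Fin (if i.val % 2 = 0 then s else t))

lemma ststColoring_injOn :
    ((Kstst s t).neighborSet v).InjOn fun u => ststColoring s t s(v, u) := by
  rintro ⟨j₁, b₁⟩ h₁ ⟨j₂, b₂⟩ h₂ h
  have hij₁ : v.1.val ≠ j₁.val := Fin.val_ne_of_ne h₁
  have hij₂ : v.1.val ≠ j₂.val := Fin.val_ne_of_ne h₂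
  simp only [ststColoring, Sym2.lift_mk, Nat.cast_inj] at h
  obtain ⟨hj, hb⟩ :=
    add_ststOffset_inj v.1.isLt j₁.isLt j₂.isLt hij₁ hij₂ b₁.isLt b₂.isLt (by omega)
  obtain rfl := Fin.ext hj
  exact congrArg (Sigma.mk j₁) (Fin.ext hb)

lemma ststColoring_mapsTo :
    ((Kstst s t).neighborSet v).MapsTo (fun u => ststColoring s t s(v, u))
      (Set.Ico v.2.val
        (v.2.val + (2 * s + 2 * t - if v.1.val % 2 = 0 then s else t : ℕ))) := by
  rintro ⟨j, b⟩ h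
  have := add_ststOffset_lt v.1.isLt j.isLt (Fin.val_ne_of_ne h) b.isLt
  simp only [ststColoring, Sym2.lift_mk, Set.mem_Ico]
  omega

lemma ncard_neighborSet_kstst :
    ((Kstst s t).neighborSet v).ncard = 2 * s + 2 * t - if v.1.val % 2 = 0 then s else t := by
  rw [SimpleGraph.ncard_neighborSet_completeMultipartiteGraph]
  have htotal :
      Nat.card (Σ i : Fin 4, Fin (if i.val % 2 = 0 then s else t)) = 2 * s + 2 * t := by
    rw [Nat.card_eq_fintype_card, Fintype.card_sigma, Fin.sum_univ_four]
    simp only [Fintype.card_fin]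
    change s + t + s + t = _
    ring
  rw [htotal, Nat.card_fin]

end Kstst

/-- For all `s, t ≥ 1`, the complete multipartite graph `K_{s,t,s,t}` is interval
colorable, i.e. `μ_int(K_{s,t,s,t}) = 1`. -/
theorem stmt0 (s t : ℕ) (hs : 1 ≤ s) (ht : 1 ≤ t) :
    impropriety (Kstst s t) = 1 := by
  have hinterval : IsIntervalColoring (Kstst s t) (ststColoring s t) :=
    isIntervalColoring_of_ordConnected fun v => by
      rw [(ststColoring_injOn v).image_eq_Ico_of_ncard_eq (ststColoring_mapsTo v)
        (ncard_neighborSet_kstst v)]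
      exact Set.ordConnected_Ico
  exact impropriety_eq_one hinterval (isKImproper_one_of_injOn ststColoring_injOn)
    (u := ⟨0, ⟨0, hs⟩⟩) (v := ⟨1, ⟨0, ht⟩⟩) (show (0 : Fin 4) ≠ 1 by decide)
end

section
/- For every integer n ≥ 1, the n-th iterated triangulation Tr(n) satisfies μ_int(Tr(n)) ≤ ⌈Δ(Tr(n))/3⌉, where Δ denotes maximum degree. -/
/-- Inner faces of the iterated triangulation are addressed by lists over
`Fin 3`: `[]` is the inner face of `Tr(0)` and `j :: f` is the `j`-th of the
three faces into which the face `f` is subdivided.  Vertices are the three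
original corners (`Sum.inl`) together with one new vertex `Sum.inr f` placed
inside each subdivided face `f`.  `triBoundary f k` is the `k`-th vertex on the
boundary triangle of the face `f`: the boundary of `j :: f` consists of two of
the boundary vertices of `f` together with the vertex added inside `f`. -/
def triBoundary : List (Fin 3) → Fin 3 → (Fin 3) ⊕ (List (Fin 3))
  | [], k => Sum.inl k
  | j :: f, k => if k.val < 2 then triBoundary f (j + k) else Sum.inr f

/-- The vertices of `Tr(n)`: the three corners and one vertex for each face of
`Tr(i)` with `i < n` (faces of depth `< n`). -/
def TrVert (n : ℕ) : Type :=
  {v : (Fin 3) ⊕ (List (Fin 3)) // ∀ l, v = Sum.inr l → l.length < n}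

/-- The `n`-th iterated triangulation `Tr(n)`: two vertices are adjacent iff
they are distinct vertices on the boundary triangle of a common face of depth
`n` (every edge of `Tr(n)` lies on the boundary of an inner face of `Tr(n)`). -/
def IterTri (n : ℕ) : SimpleGraph (TrVert n) where
  Adj u v := u ≠ v ∧ ∃ f : List (Fin 3), f.length = n ∧
    ∃ k k' : Fin 3, u.val = triBoundary f k ∧ v.val = triBoundary f k'
  symm := by
    constructor
    rintro u v ⟨huv, f, hf, k, k', hu, hv⟩
    exact ⟨huv.symm, f, hf, k', k, hv, hu⟩
  loopless := by
    constructor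
    rintro u ⟨h, -⟩
    exact h rfl

/-!
Color the edges of `Tr(n)` with `Fin 3`: the edge from the vertex inserted into a face `f` to
the boundary vertex of `f` at position `k` gets `f.sum + 2 * k`, the edge between corners `a`
and `b` gets `a + b`. At every vertex, the edges to the boundary of its own face (for a corner:
to the other corners and to the center) carry three distinct colors, so every vertex sees all
colors and the coloring is an interval coloring. Every other edge at a vertex `x` leads to a
face containing `x`; such faces are reached from a root by binary words of length `< n - 1`
recording the position of `x`, and `f.sum + k` is constant along the way, so the color
determines the root. Hence each color appears at most `1 + (2 ^ (n - 1) - 1)` times at `x`,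
while the center has degree `3 * 2 ^ (n - 1)`.
-/

section IntervalColoring

variable {V : Type*} {G : SimpleGraph V} {m : ℕ}

lemma isIntervalColoring_of_forall_exists (c : Sym2 V → Fin m)
    (h : ∀ v (z : Fin m), ∃ u, G.Adj v u ∧ c s(v, u) = z) :
    IsIntervalColoring G (fun e => ((c e : ℕ) : ℤ)) := by
  rintro v _ _ x ⟨u₁, -, rfl⟩ ⟨u₂, -, rfl⟩ h₁ h₂
  dsimp only at h₁ h₂ ⊢
  have := (c s(v, u₂)).isLt
  obtain ⟨u, hu, hcu⟩ := h v ⟨x.toNat, by omega⟩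
  exact ⟨u, hu, by rw [hcu]; push_cast; omega⟩

lemma isKImproper_of_forall_ncard_le (c : Sym2 V → Fin m) {k : ℕ}
    (h : ∀ v (z : Fin m), {u | G.Adj v u ∧ c s(v, u) = z}.ncard ≤ k) :
    IsKImproper G (fun e => ((c e : ℕ) : ℤ)) k := by
  intro v q
  by_cases hq : ∃ z : Fin m, ((z : ℕ) : ℤ) = q
  · obtain ⟨z, rfl⟩ := hq
    simpa only [Nat.cast_inj, Fin.val_inj] using h v z
  · have hempty : {u | G.Adj v u ∧ ((c s(v, u) : ℕ) : ℤ) = q} = ∅ :=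
      Set.eq_empty_of_forall_notMem fun u hu => hq ⟨_, hu.2⟩
    simp [hempty]

lemma neighborSet_ncard_le_maxDeg [Finite V] (v : V) :
    (G.neighborSet v).ncard ≤ maxDeg G :=
  le_csSup ⟨Nat.card V, by rintro _ ⟨u, rfl⟩; exact Set.ncard_le_card _⟩ ⟨v, rfl⟩

end IntervalColoring

lemma ncard_setOf_length_lt (N : ℕ) :
    {w : List (Fin 2) | w.length < N}.ncard = 2 ^ N - 1 := by
  induction N with
  | zero => simp
  | succ N ih =>
    have hsplit : {w : List (Fin 2) | w.length < N + 1} =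
        insert [] ((fun p => p.1 :: p.2) '' (Set.univ ×ˢ {w | w.length < N})) := by
      ext (_ | ⟨r, w⟩) <;> simp
    have hinj : Function.Injective (fun p : Fin 2 × List (Fin 2) => p.1 :: p.2) :=
      fun p q h => Prod.ext (List.cons.inj h).1 (List.cons.inj h).2
    rw [hsplit, Set.ncard_insert_of_notMem (by simp)
      ((Set.finite_univ.prod (List.finite_length_lt _ N)).image _),
      Set.ncard_image_of_injective _ hinj, Set.ncard_prod, ih, Set.ncard_univ, Nat.card_fin]
    have := Nat.one_le_two_pow (n := N)
    rw [pow_succ]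
    omega

lemma triBoundary_cons_castSucc (j : Fin 3) (f : List (Fin 3)) (r : Fin 2) :
    triBoundary (j :: f) r.castSucc = triBoundary f (j + r.castSucc) := by
  simp [triBoundary, r.isLt]

lemma length_lt_of_triBoundary_eq_inr {f g : List (Fin 3)} {k : Fin 3}
    (h : triBoundary f k = .inr g) : g.length < f.length := by
  induction f generalizing k with
  | nil => cases h
  | cons j f ih =>
    rcases Fin.eq_castSucc_or_eq_last k with ⟨r, rfl⟩ | rfl
    · rw [triBoundary_cons_castSucc] at h
      exact (ih h).trans (Nat.lt_succ_self _)
    · cases h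
      exact Nat.lt_succ_self _

lemma triBoundary_ne_inr_self (f : List (Fin 3)) (k : Fin 3) : triBoundary f k ≠ .inr f :=
  fun h => (length_lt_of_triBoundary_eq_inr h).false

lemma triBoundary_injective (f : List (Fin 3)) : Function.Injective (triBoundary f) := by
  induction f with
  | nil => exact fun k k' h => Sum.inl_injective h
  | cons j f ih =>
    intro k k' h
    rcases Fin.eq_castSucc_or_eq_last k with ⟨r, rfl⟩ | rfl <;>
      rcases Fin.eq_castSucc_or_eq_last k' with ⟨r', rfl⟩ | rfl
    · rw [triBoundary_cons_castSucc, triBoundary_cons_castSucc] at h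
      exact add_left_cancel (ih h)
    · rw [triBoundary_cons_castSucc] at h
      exact absurd h (triBoundary_ne_inr_self f _)
    · rw [triBoundary_cons_castSucc] at h
      exact absurd h.symm (triBoundary_ne_inr_self f _)
    · rfl

lemma triBoundary_pair_cases (f : List (Fin 3)) {k k' : Fin 3} (hkk' : k ≠ k') :
    (∃ g k₀, triBoundary f k = .inr g ∧ triBoundary f k' = triBoundary g k₀) ∨
    (∃ g k₀, triBoundary f k' = .inr g ∧ triBoundary f k = triBoundary g k₀) ∨
    (∃ a b, triBoundary f k = .inl a ∧ triBoundary f k' = .inl b) := by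
  induction f generalizing k k' with
  | nil => exact .inr (.inr ⟨k, k', rfl, rfl⟩)
  | cons j f ih =>
    rcases Fin.eq_castSucc_or_eq_last k with ⟨r, rfl⟩ | rfl <;>
      rcases Fin.eq_castSucc_or_eq_last k' with ⟨r', rfl⟩ | rfl
    · simp only [triBoundary_cons_castSucc]
      exact ih fun h => hkk' (add_left_cancel h)
    · rw [triBoundary_cons_castSucc]
      exact .inr (.inl ⟨f, _, rfl, rfl⟩)
    · rw [triBoundary_cons_castSucc]
      exact .inl ⟨f, _, rfl, rfl⟩
    · exact absurd rfl hkk'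

lemma exists_child_positions : ∀ k k' : Fin 3, ∃ j : Fin 3, ∃ r r' : Fin 2,
    j + r.castSucc = k ∧ j + r'.castSucc = k' := by
  decide

lemma exists_deeper_face (d : ℕ) (f : List (Fin 3)) (k k' : Fin 3) :
    ∃ f' p p', f'.length = f.length + d ∧
      triBoundary f' p = triBoundary f k ∧ triBoundary f' p' = triBoundary f k' := by
  induction d generalizing f k k' with
  | zero => exact ⟨f, k, k', rfl, rfl, rfl⟩
  | succ d ih =>
    obtain ⟨j, r, r', rfl, rfl⟩ := exists_child_positions k k'
    obtain ⟨f', p, p', hlen, hp, hp'⟩ := ih (j :: f) r.castSucc r'.castSucc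
    refine ⟨f', p, p', by rw [hlen, List.length_cons]; omega, ?_, ?_⟩
    · rw [hp, triBoundary_cons_castSucc]
    · rw [hp', triBoundary_cons_castSucc]

section Adjacency

variable {n : ℕ} {u v : TrVert n}

lemma iterTri_adj_of_triBoundary {f : List (Fin 3)} {k k' : Fin 3} (hf : f.length ≤ n)
    (huv : u ≠ v) (hu : u.val = triBoundary f k) (hv : v.val = triBoundary f k') :
    (IterTri n).Adj u v := by
  obtain ⟨f', p, p', hlen, hp, hp'⟩ := exists_deeper_face (n - f.length) f k k'
  exact ⟨huv, f', by omega, p, p', hu.trans hp.symm, hv.trans hp'.symm⟩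

lemma iterTri_adj_inr_triBoundary {f : List (Fin 3)} {k : Fin 3} (hu : u.val = .inr f)
    (hv : v.val = triBoundary f k) : (IterTri n).Adj u v := by
  refine iterTri_adj_of_triBoundary (f := k :: f) (k := 2) (k' := (0 : Fin 2).castSucc)
    (u.2 f hu) (fun h => triBoundary_ne_inr_self f k ?_) hu ?_
  · rw [← hv, ← hu, h]
  · rw [triBoundary_cons_castSucc, Fin.castSucc_zero, add_zero, hv]

lemma iterTri_adj_inl_inl {a b : Fin 3} (hab : a ≠ b) (hu : u.val = .inl a)
    (hv : v.val = .inl b) : (IterTri n).Adj u v :=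
  iterTri_adj_of_triBoundary (f := []) (Nat.zero_le n)
    (fun h => hab (Sum.inl_injective (hu.symm.trans (h ▸ hv)))) hu hv

lemma iterTri_adj_cases (h : (IterTri n).Adj u v) :
    (∃ f k, u.val = .inr f ∧ v.val = triBoundary f k) ∨
    (∃ f k, v.val = .inr f ∧ u.val = triBoundary f k) ∨
    (∃ a b, u.val = .inl a ∧ v.val = .inl b) := by
  obtain ⟨huv, f, -, k, k', hu, hv⟩ := h
  have hkk' : k ≠ k' := by
    rintro rfl
    exact huv (Subtype.ext (hu.trans hv.symm))
  rw [hu, hv]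
  exact triBoundary_pair_cases f hkk'

end Adjacency

section Descend

/-- Follow a boundary vertex from the face `s.1`, where it sits at position `s.2`, down into
the subdivision: the letter `r` selects the child face in which it sits at position `r`. -/
def descend (s : List (Fin 3) × Fin 3) : List (Fin 2) → List (Fin 3) × Fin 3
  | [] => s
  | r :: w => (((descend s w).2 - r.castSucc) :: (descend s w).1, r.castSucc)

def descendPos (p : Fin 3) : List (Fin 2) → Fin 3
  | [] => p
  | r :: _ => r.castSucc

variable (s : List (Fin 3) × Fin 3) (w : List (Fin 2))

lemma descend_snd : (descend s w).2 = descendPos s.2 w := by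
  cases w <;> rfl

lemma length_descend : (descend s w).1.length = s.1.length + w.length := by
  induction w with
  | nil => rfl
  | cons r w ih => simp [descend, ih, Nat.add_assoc]

lemma triBoundary_descend :
    triBoundary (descend s w).1 (descend s w).2 = triBoundary s.1 s.2 := by
  induction w with
  | nil => rfl
  | cons r w ih => rw [descend, triBoundary_cons_castSucc, sub_add_cancel, ih]

lemma sum_add_descend : (descend s w).1.sum + (descend s w).2 = s.1.sum + s.2 := by
  induction w with
  | nil => rfl
  | cons r w ih =>
    rw [← ih, descend, List.sum_cons]
    abel

lemma descend_injective {s s' : List (Fin 3) × Fin 3} {w w' : List (Fin 2)}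
    (hw : w.length = w'.length) (h : descend s w = descend s' w') : s = s' ∧ w = w' := by
  induction w generalizing w' with
  | nil =>
    obtain rfl := List.length_eq_zero_iff.mp hw.symm
    exact ⟨h, rfl⟩
  | cons r w ih =>
    obtain _ | ⟨r', w'⟩ := w'
    · cases hw
    simp only [descend, Prod.mk.injEq, List.cons.injEq] at h
    obtain ⟨⟨hpos, hface⟩, hr⟩ := h
    obtain rfl := Fin.castSucc_injective _ hr
    obtain ⟨rfl, rfl⟩ := ih (by simpa using hw) (Prod.ext hface (sub_left_inj.mp hpos))
    exact ⟨rfl, rfl⟩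

lemma descend_fst_injective {s s' : List (Fin 3) × Fin 3} {w w' : List (Fin 2)}
    (hs : s.1.length = s'.1.length) (htb : triBoundary s.1 s.2 = triBoundary s'.1 s'.2)
    (h : (descend s w).1 = (descend s' w').1) : s = s' ∧ w = w' := by
  have hw : w.length = w'.length := by
    have := congrArg List.length h
    rw [length_descend, length_descend] at this
    omega
  have hpos := triBoundary_injective _
    ((triBoundary_descend s w).trans
      (htb.trans ((triBoundary_descend s' w').symm.trans (by rw [h]))))
  exact descend_injective hw (Prod.ext h hpos)

/-- A root pair sits at a corner of `Tr(0)` or at position `2` of a face, i.e. at the vertex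
inserted into its parent. -/
lemma exists_descend_eq (f : List (Fin 3)) (k : Fin 3) :
    ∃ s w, descend s w = (f, k) ∧ (s.1 = [] ∨ s.2 = 2) := by
  induction f generalizing k with
  | nil => exact ⟨([], k), [], rfl, .inl rfl⟩
  | cons j f ih =>
    rcases Fin.eq_castSucc_or_eq_last k with ⟨r, rfl⟩ | rfl
    · obtain ⟨s, w, hsw, hs⟩ := ih (j + r.castSucc)
      exact ⟨s, r :: w, by rw [descend, hsw, add_sub_cancel_right], hs⟩
    · exact ⟨(j :: f, 2), [], rfl, .inr rfl⟩

lemma exists_descend_of_triBoundary_eq_inl {f : List (Fin 3)} {k i : Fin 3}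
    (h : triBoundary f k = .inl i) : ∃ w, descend ([], i) w = (f, k) := by
  obtain ⟨⟨_ | ⟨j, g⟩, p⟩, w, hsw, hroot⟩ := exists_descend_eq f k
  · have := triBoundary_descend ([], p) w
    rw [hsw, h] at this
    cases this
    exact ⟨w, hsw⟩
  · obtain rfl : p = 2 := hroot.resolve_left (List.cons_ne_nil _ _)
    have := triBoundary_descend (j :: g, 2) w
    rw [hsw, h] at this
    cases this

lemma exists_descend_of_triBoundary_eq_inr {f g : List (Fin 3)} {k : Fin 3}
    (h : triBoundary f k = .inr g) : ∃ j w, descend (j :: g, 2) w = (f, k) := by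
  obtain ⟨⟨_ | ⟨j, g'⟩, p⟩, w, hsw, hroot⟩ := exists_descend_eq f k
  · have := triBoundary_descend ([], p) w
    rw [hsw, h] at this
    cases this
  · obtain rfl : p = 2 := hroot.resolve_left (List.cons_ne_nil _ _)
    have := triBoundary_descend (j :: g', 2) w
    rw [hsw, h] at this
    cases this
    exact ⟨j, w, hsw⟩

end Descend

/-- On every edge of `Tr(n)` at most one of the two summands of `edgeColor` is nonzero. -/
def ownColor : Fin 3 ⊕ List (Fin 3) → Fin 3 ⊕ List (Fin 3) → Fin 3
  | .inl a, .inl _ => a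
  | .inl _, .inr _ => 0
  | .inr f, y => ∑ k, if triBoundary f k = y then f.sum + 2 * k else 0

def edgeColor (x y : Fin 3 ⊕ List (Fin 3)) : Fin 3 := ownColor x y + ownColor y x

lemma edgeColor_comm (x y : Fin 3 ⊕ List (Fin 3)) : edgeColor x y = edgeColor y x :=
  add_comm _ _

lemma edgeColor_inl_inl (a b : Fin 3) : edgeColor (.inl a) (.inl b) = a + b := rfl

lemma edgeColor_inr_triBoundary (f : List (Fin 3)) (k : Fin 3) :
    edgeColor (.inr f) (triBoundary f k) = f.sum + 2 * k := by
  have hdown : ownColor (.inr f) (triBoundary f k) = f.sum + 2 * k := by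
    simp only [ownColor, (triBoundary_injective f).eq_iff, Finset.sum_ite_eq',
      Finset.mem_univ, if_true]
  have hup : ownColor (triBoundary f k) (.inr f) = 0 := by
    rcases h : triBoundary f k with a | g
    · rfl
    · refine Finset.sum_eq_zero fun k' _ => if_neg fun h' => ?_
      exact lt_asymm (length_lt_of_triBoundary_eq_inr h) (length_lt_of_triBoundary_eq_inr h')
  rw [edgeColor, hdown, hup, add_zero]

def trCenter {n : ℕ} (hn : 1 ≤ n) : TrVert n := ⟨.inr [], fun l hl => by cases hl; exact hn⟩

def trColoring (n : ℕ) : Sym2 (TrVert n) → Fin 3 :=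
  Sym2.lift ⟨fun u v => edgeColor u.val v.val, fun _ _ => edgeColor_comm _ _⟩

lemma exists_adj_trColoring_eq {n : ℕ} (hn : 1 ≤ n) (v : TrVert n) (z : Fin 3) :
    ∃ u, (IterTri n).Adj v u ∧ trColoring n s(v, u) = z := by
  obtain ⟨a | g, hv⟩ := v
  · by_cases hz : z = 2 * a
    · refine ⟨trCenter hn,
        (iterTri_adj_inr_triBoundary (u := trCenter hn) (k := a) rfl rfl).symm, ?_⟩
      change edgeColor (.inl a) (.inr []) = z
      rw [edgeColor_comm]
      exact (edgeColor_inr_triBoundary [] a).trans (by simp [hz])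
    · refine ⟨⟨.inl (z - a), fun l hl => by cases hl⟩,
        iterTri_adj_inl_inl (b := z - a) (by grind) rfl rfl, ?_⟩
      exact (edgeColor_inl_inl a (z - a)).trans (add_sub_cancel a z)
  · obtain ⟨k, hk⟩ : ∃ k : Fin 3, g.sum + 2 * k = z := ⟨2 * (z - g.sum), by grind⟩
    refine ⟨⟨triBoundary g k,
        fun l hl => (length_lt_of_triBoundary_eq_inr hl).trans (hv g rfl)⟩,
      iterTri_adj_inr_triBoundary rfl rfl, ?_⟩
    exact (edgeColor_inr_triBoundary g k).trans hk

def lowerNeighbor : Fin 3 ⊕ List (Fin 3) → Fin 3 → Fin 3 ⊕ List (Fin 3)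
  | .inl a, z => if z = 2 * a then .inr [] else .inl (z - a)
  | .inr g, z => triBoundary g (2 * (z - g.sum))

/-- Since `f.sum + k` is invariant under `descend`, the color `f.sum + 2 * k` of the edge
reached at the end of a descent determines the root face `j :: g` (above a vertex `.inr g`),
respectively the first step (above a corner `.inl i`). -/
def upperNeighbor : Fin 3 ⊕ List (Fin 3) → Fin 3 → List (Fin 2) → Fin 3 ⊕ List (Fin 3)
  | .inl i, z, w => .inr (descend ([], i) ((if z = i then 0 else 1) :: w)).1
  | .inr g, z, w => .inr (descend ((z - g.sum - 2 - descendPos 2 w) :: g, 2) w).1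

lemma exists_upperNeighbor_eq_of_triBoundary_eq_inl {f : List (Fin 3)} {k i : Fin 3}
    (h : triBoundary f k = .inl i) (hf : f ≠ []) :
    ∃ w, w.length + 1 = f.length ∧ upperNeighbor (.inl i) (f.sum + 2 * k) w = .inr f := by
  obtain ⟨_ | ⟨r, w⟩, hw⟩ := exists_descend_of_triBoundary_eq_inl h
  · cases hw
    exact absurd rfl hf
  have hsum := sum_add_descend ([], i) (r :: w)
  have hlen := length_descend ([], i) (r :: w)
  rw [hw] at hsum hlen
  obtain rfl : k = r.castSucc := congrArg Prod.snd hw.symm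
  refine ⟨w, by simpa [Nat.add_comm] using hlen.symm, ?_⟩
  have hcol : f.sum + 2 * r.castSucc = i + r.castSucc := by
    simp only [List.sum_nil, zero_add] at hsum
    grind
  have hbit : ∀ (i : Fin 3) (r : Fin 2), (if i + r.castSucc = i then (0 : Fin 2) else 1) = r := by
    decide
  simp only [upperNeighbor, hcol, hbit, hw]

lemma exists_upperNeighbor_eq_of_triBoundary_eq_inr {f g : List (Fin 3)} {k : Fin 3}
    (h : triBoundary f k = .inr g) :
    ∃ w, g.length + 1 + w.length = f.length ∧
      upperNeighbor (.inr g) (f.sum + 2 * k) w = .inr f := by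
  obtain ⟨j, w, hw⟩ := exists_descend_of_triBoundary_eq_inr h
  have hsum := sum_add_descend (j :: g, 2) w
  have hlen := length_descend (j :: g, 2) w
  have hpos := descend_snd (j :: g, 2) w
  rw [hw] at hsum hlen hpos
  refine ⟨w, by simpa using hlen.symm, ?_⟩
  have hroot : f.sum + 2 * k - g.sum - 2 - descendPos 2 w = j := by
    simp only [List.sum_cons] at hsum hpos
    grind
  simp only [upperNeighbor, hroot, hw]

lemma lowerNeighbor_or_upperNeighbor_of_adj {n : ℕ} {v u : TrVert n} (h : (IterTri n).Adj v u) :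
    u.val = lowerNeighbor v.val (edgeColor v.val u.val) ∨
      ∃ w : List (Fin 2), w.length < n - 1 ∧
        u.val = upperNeighbor v.val (edgeColor v.val u.val) w := by
  rcases iterTri_adj_cases h with ⟨g, k, hv, hu⟩ | ⟨f, k, hu, hv⟩ | ⟨a, b, hv, hu⟩
  · left
    rw [hv, hu, edgeColor_inr_triBoundary, lowerNeighbor]
    congr 1
    grind
  · have hf : f.length < n := u.2 f hu
    rw [hu, hv, edgeColor_comm, edgeColor_inr_triBoundary]
    rcases htb : triBoundary f k with i | g
    · by_cases hf0 : f = []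
      · subst hf0
        cases htb
        left
        simp [lowerNeighbor]
      · obtain ⟨w, hlen, hw⟩ := exists_upperNeighbor_eq_of_triBoundary_eq_inl htb hf0
        exact .inr ⟨w, by omega, hw.symm⟩
    · obtain ⟨w, hlen, hw⟩ := exists_upperNeighbor_eq_of_triBoundary_eq_inr htb
      exact .inr ⟨w, by omega, hw.symm⟩
  · left
    have hab : a ≠ b := by
      rintro rfl
      exact h.ne (Subtype.ext (hv.trans hu.symm))
    rw [hv, hu, edgeColor_inl_inl, lowerNeighbor, if_neg (by grind), add_sub_cancel_left]

lemma ncard_adj_trColoring_eq_le {n : ℕ} (v : TrVert n) (z : Fin 3) :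
    {u | (IterTri n).Adj v u ∧ trColoring n s(v, u) = z}.ncard ≤ 2 ^ (n - 1) := by
  set S := {u | (IterTri n).Adj v u ∧ trColoring n s(v, u) = z}
  have hwords := List.finite_length_lt (Fin 2) (n - 1)
  have hcover : Subtype.val '' S ⊆
      insert (lowerNeighbor v.val z) (upperNeighbor v.val z '' {w | w.length < n - 1}) := by
    rintro _ ⟨u, ⟨hadj, rfl⟩, rfl⟩
    rcases lowerNeighbor_or_upperNeighbor_of_adj hadj with h | ⟨w, hw, h⟩
    · exact .inl h
    · exact .inr ⟨w, hw, h.symm⟩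
  calc S.ncard = (Subtype.val '' S).ncard :=
        (Set.ncard_image_of_injective _ Subtype.val_injective).symm
    _ ≤ (upperNeighbor v.val z '' {w | w.length < n - 1}).ncard + 1 :=
        (Set.ncard_le_ncard hcover ((hwords.image _).insert _)).trans (Set.ncard_insert_le _ _)
    _ ≤ {w : List (Fin 2) | w.length < n - 1}.ncard + 1 := by
        gcongr
        exact Set.ncard_image_le hwords
    _ = 2 ^ (n - 1) := by
        rw [ncard_setOf_length_lt]
        have := Nat.one_le_two_pow (n := n - 1)
        omega

instance (n : ℕ) : Finite (TrVert n) := by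
  refine Set.Finite.to_subtype (((Set.finite_range Sum.inl).union
    ((List.finite_length_lt (Fin 3) n).image Sum.inr)).subset ?_)
  rintro (a | f) hf
  · exact .inl ⟨a, rfl⟩
  · exact .inr ⟨f, hf f rfl, rfl⟩

lemma three_mul_two_pow_le_ncard_neighborSet_trCenter {n : ℕ} (hn : 1 ≤ n) :
    3 * 2 ^ (n - 1) ≤ ((IterTri n).neighborSet (trCenter hn)).ncard := by
  let up : Fin 3 × List (Fin 2) → Fin 3 ⊕ List (Fin 3) := fun p =>
    .inr (descend ([p.1], 2) p.2).1
  set W := {w : List (Fin 2) | w.length < n - 1}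
  have hsub : Set.range Sum.inl ∪ up '' (Set.univ ×ˢ W) ⊆
      Subtype.val '' (IterTri n).neighborSet (trCenter hn) := by
    rintro _ (⟨a, rfl⟩ | ⟨⟨j, w⟩, ⟨-, hw⟩, rfl⟩)
    · exact ⟨⟨.inl a, fun l hl => by cases hl⟩,
        iterTri_adj_inr_triBoundary (k := a) rfl rfl, rfl⟩
    · have hlen := length_descend ([j], 2) w
      refine ⟨⟨up (j, w), fun l hl => ?_⟩, (iterTri_adj_inr_triBoundary rfl
        (triBoundary_descend ([j], 2) w).symm).symm, rfl⟩
      cases hl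
      simp only [Set.mem_ofPred_eq, W] at hw
      simp only [hlen, List.length_singleton]
      omega
  have hinj : Set.InjOn up (Set.univ ×ˢ W) := by
    rintro ⟨j, w⟩ - ⟨j', w'⟩ - h
    obtain ⟨hs, rfl⟩ := descend_fst_injective (s := ([j], 2)) (s' := ([j'], 2)) rfl rfl
      (Sum.inr_injective h)
    cases hs
    rfl
  have hdisj : Disjoint (Set.range Sum.inl) (up '' (Set.univ ×ˢ W)) :=
    Set.disjoint_left.mpr fun _ ⟨_, ha⟩ ⟨_, _, hb⟩ => by rw [← ha] at hb; cases hb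
  calc 3 * 2 ^ (n - 1) = Nat.card (Fin 3) + 3 * W.ncard := by
        rw [ncard_setOf_length_lt, Nat.card_fin]
        have := Nat.one_le_two_pow (n := n - 1)
        omega
    _ = (Set.range Sum.inl ∪ up '' (Set.univ ×ˢ W)).ncard := by
        rw [Set.ncard_union_eq hdisj (Set.finite_range _)
          ((Set.finite_univ.prod (List.finite_length_lt _ _)).image _),
          Set.ncard_range_of_injective Sum.inl_injective, hinj.ncard_image, Set.ncard_prod,
          Set.ncard_univ, Nat.card_fin]
    _ ≤ (Subtype.val '' (IterTri n).neighborSet (trCenter hn)).ncard :=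
        Set.ncard_le_ncard hsub ((Set.toFinite ((IterTri n).neighborSet (trCenter hn))).image _)
    _ = ((IterTri n).neighborSet (trCenter hn)).ncard :=
        Set.ncard_image_of_injective _ Subtype.val_injective

/-- For every `n ≥ 1`, `μ_int(Tr(n)) ≤ ⌈Δ(Tr(n))/3⌉`. -/
theorem stmt5 (n : ℕ) (hn : 1 ≤ n) :
    impropriety (IterTri n) ≤ (maxDeg (IterTri n) + 2) / 3 := by
  have hμ : impropriety (IterTri n) ≤ 2 ^ (n - 1) :=
    Nat.sInf_le ⟨_, isIntervalColoring_of_forall_exists _ (exists_adj_trColoring_eq hn),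
      isKImproper_of_forall_ncard_le _ ncard_adj_trColoring_eq_le⟩
  have hΔ := (three_mul_two_pow_le_ncard_neighborSet_trCenter hn).trans
    (neighborSet_ncard_le_maxDeg _)
  omega
end

section
/- For every integer k ≥ 1, if H is the path P_k on k vertices, then μ_int(K_1 ⊙ H) ≤ 2, where K_1 ⊙ H is the graph obtained from H by adding a single new universal vertex adjacent to every vertex of H. -/
/-- The corona product `G ⊙ H`: take `G` and one copy of `H` for every vertex
of `G`, joining each vertex `v` of `G` to all vertices of its copy of `H`. -/
def corona {V W : Type*} (G : SimpleGraph V) (H : SimpleGraph W) :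
    SimpleGraph (V ⊕ V × W) where
  Adj x y :=
    match x, y with
    | Sum.inl u, Sum.inl v => G.Adj u v
    | Sum.inl u, Sum.inr p => u = p.1
    | Sum.inr p, Sum.inl u => u = p.1
    | Sum.inr p, Sum.inr q => p.1 = q.1 ∧ H.Adj p.2 q.2
  symm := by
    constructor
    rintro (u | p) (v | q) h
    · exact h.symm
    · exact h
    · exact h
    · exact ⟨h.1.symm, h.2.symm⟩
  loopless := by
    constructor
    rintro (u | p) h
    · exact G.irrefl h
    · exact H.irrefl h.2

/-!
Colour the spoke from the hub to path vertex `i` with `⌊i/2⌋` and the path edge `{i, i+1}` with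
`⌊i/2⌋ + 1`. At the hub, colour `q` appears exactly on the spokes to `2q` and `2q + 1`, and the
colours used are `0, …, ⌊(k-1)/2⌋`. At path vertex `i` only the two colours `⌊i/2⌋` and
`⌊i/2⌋ + 1` occur, which is automatically an interval, and no colour occurs three times.
-/

open SimpleGraph Sum

lemma Set.ncard_le_two_of_forall_mem_eq_or_eq {α : Type*} {s : Set α}
    (h : ∀ a ∈ s, ∀ b ∈ s, ∀ c ∈ s, a = b ∨ a = c ∨ b = c) : s.ncard ≤ 2 := by
  rcases s.finite_or_infinite with hs | hs
  · by_contra! h2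
    obtain ⟨a, b, c, ha, hb, hc, hab, hac, hbc⟩ := (Set.two_lt_ncard_iff hs).1 h2
    rcases h a ha b hb c hc with h | h | h <;> contradiction
  · simp [hs.ncard]

section Coloring

variable {V : Type*} {G : SimpleGraph V} {c : Sym2 V → ℤ}

lemma impropriety_le_of_isIntervalColoring {k : ℕ} (hc : IsIntervalColoring G c)
    (hk : IsKImproper G c k) : impropriety G ≤ k :=
  Nat.sInf_le ⟨c, hc, hk⟩

lemma exists_adj_color_eq_of_forall_color_eq_or_eq_add_one {v : V} {m : ℤ}
    (hv : ∀ u, G.Adj v u → c s(v, u) = m ∨ c s(v, u) = m + 1) {a b x : ℤ}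
    (ha : ∃ u, G.Adj v u ∧ c s(v, u) = a) (hb : ∃ u, G.Adj v u ∧ c s(v, u) = b)
    (hax : a ≤ x) (hxb : x ≤ b) : ∃ u, G.Adj v u ∧ c s(v, u) = x := by
  obtain ⟨u, hu, rfl⟩ := ha
  obtain ⟨w, hw, rfl⟩ := hb
  have := hv u hu
  have := hv w hw
  obtain rfl | rfl : x = c s(v, u) ∨ x = c s(v, w) := by omega
  exacts [⟨u, hu, rfl⟩, ⟨w, hw, rfl⟩]

end Coloring

section Corona

variable {V W : Type*} {G : SimpleGraph V} {H : SimpleGraph W}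

lemma corona_adj_inl_iff {u : V} {y : V ⊕ V × W} :
    (corona G H).Adj (inl u) y ↔ (∃ v, G.Adj u v ∧ y = inl v) ∨ ∃ w, y = inr (u, w) := by
  rcases y with v | ⟨v, w⟩ <;> simp [corona, eq_comm, and_comm]

lemma corona_adj_inr_iff {p : V × W} {y : V ⊕ V × W} :
    (corona G H).Adj (inr p) y ↔ y = inl p.1 ∨ ∃ w, H.Adj p.2 w ∧ y = inr (p.1, w) := by
  rcases y with v | ⟨v, w⟩ <;> simp [corona, eq_comm, and_comm]

lemma corona_bot_adj_inl_iff {u : V} {y : V ⊕ V × W} :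
    (corona ⊥ H).Adj (inl u) y ↔ ∃ w, y = inr (u, w) := by
  simp [corona_adj_inl_iff]

end Corona

section PathCorona

variable {V : Type*} {k : ℕ}

/-- Pairs of two hubs are never edges of `⊥ ⊙ P_k`, so their value `0` is arbitrary. -/
def pathCoronaColor : V ⊕ V × Fin k → V ⊕ V × Fin k → ℤ
  | inl _, inl _ => 0
  | inl _, inr p | inr p, inl _ => (p.2 / 2 : ℕ)
  | inr p, inr q => (min p.2.val q.2.val / 2 : ℕ) + 1

lemma pathCoronaColor_comm (x y : V ⊕ V × Fin k) :
    pathCoronaColor x y = pathCoronaColor y x := by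
  cases x <;> cases y <;> simp [pathCoronaColor, Nat.min_comm]

def pathCoronaColoring : Sym2 (V ⊕ V × Fin k) → ℤ :=
  Sym2.lift ⟨pathCoronaColor, pathCoronaColor_comm⟩

@[simp] lemma pathCoronaColoring_mk (x y : V ⊕ V × Fin k) :
    pathCoronaColoring s(x, y) = pathCoronaColor x y :=
  rfl

lemma pathCoronaColoring_inr_eq_or_eq_add_one {p : V × Fin k} {y : V ⊕ V × Fin k}
    (hy : (corona ⊥ (pathGraph k)).Adj (inr p) y) :
    pathCoronaColoring s(inr p, y) = (p.2 / 2 : ℕ) ∨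
      pathCoronaColoring s(inr p, y) = ((p.2 / 2 : ℕ) : ℤ) + 1 := by
  simp only [corona_adj_inr_iff, pathGraph_adj] at hy
  obtain rfl | ⟨j, hj, rfl⟩ := hy
  · simp [pathCoronaColor]
  · simp only [pathCoronaColoring_mk, pathCoronaColor]
    omega

lemma isIntervalColoring_pathCoronaColoring :
    IsIntervalColoring (corona (⊥ : SimpleGraph V) (pathGraph k)) pathCoronaColoring := by
  rintro (u | p) a b x ha hb hax hxb
  · obtain ⟨_, hy, rfl⟩ := ha
    obtain ⟨_, hz, rfl⟩ := hb
    obtain ⟨i, rfl⟩ := corona_bot_adj_inl_iff.1 hy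
    obtain ⟨j, rfl⟩ := corona_bot_adj_inl_iff.1 hz
    simp only [pathCoronaColoring_mk, pathCoronaColor] at hax hxb
    have := j.isLt
    refine ⟨inr (u, ⟨2 * x.toNat, by omega⟩), rfl, ?_⟩
    simp only [pathCoronaColoring_mk, pathCoronaColor]
    omega
  · exact exists_adj_color_eq_of_forall_color_eq_or_eq_add_one
      (fun _ ↦ pathCoronaColoring_inr_eq_or_eq_add_one) ha hb hax hxb

lemma isKImproper_pathCoronaColoring :
    IsKImproper (corona (⊥ : SimpleGraph V) (pathGraph k)) pathCoronaColoring 2 := by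
  intro v q
  apply Set.ncard_le_two_of_forall_mem_eq_or_eq
  rintro y₁ ⟨h₁, hc₁⟩ y₂ ⟨h₂, hc₂⟩ y₃ ⟨h₃, hc₃⟩
  rcases v with u | ⟨u, i⟩
  · obtain ⟨i₁, rfl⟩ := corona_bot_adj_inl_iff.1 h₁
    obtain ⟨i₂, rfl⟩ := corona_bot_adj_inl_iff.1 h₂
    obtain ⟨i₃, rfl⟩ := corona_bot_adj_inl_iff.1 h₃
    simp only [pathCoronaColoring_mk, pathCoronaColor] at hc₁ hc₂ hc₃
    simp only [inr.injEq, Prod.mk.injEq, true_and, Fin.ext_iff]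
    omega
  · simp only [corona_adj_inr_iff, pathGraph_adj] at h₁ h₂ h₃
    obtain rfl | ⟨i₁, hi₁, rfl⟩ := h₁ <;> obtain rfl | ⟨i₂, hi₂, rfl⟩ := h₂ <;>
      obtain rfl | ⟨i₃, hi₃, rfl⟩ := h₃ <;>
      simp only [pathCoronaColoring_mk, pathCoronaColor] at hc₁ hc₂ hc₃ <;>
      simp only [inr.injEq, Prod.mk.injEq, true_and, Fin.ext_iff, reduceCtorEq, true_or,
        or_true] <;>
      omega

theorem impropriety_corona_bot_pathGraph_le_two (V : Type*) (k : ℕ) :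
    impropriety (corona (⊥ : SimpleGraph V) (pathGraph k)) ≤ 2 :=
  impropriety_le_of_isIntervalColoring isIntervalColoring_pathCoronaColoring
    isKImproper_pathCoronaColoring

end PathCorona

theorem stmt8_general (k : ℕ) :
    impropriety (corona (⊥ : SimpleGraph (Fin 1)) (SimpleGraph.pathGraph k)) ≤ 2 :=
  impropriety_corona_bot_pathGraph_le_two (Fin 1) k

/-- For every `k ≥ 1`, the corona product `K_1 ⊙ P_k` (a universal vertex added
to the path on `k` vertices) satisfies `μ_int(K_1 ⊙ P_k) ≤ 2`. -/
theorem stmt8 (k : ℕ) (hk : 1 ≤ k) :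
    impropriety (corona (⊥ : SimpleGraph (Fin 1)) (SimpleGraph.pathGraph k)) ≤ 2 :=
  stmt8_general k
end

section
/- For every integer k ≥ 1, if H is the star S_k = K_{1,k} consisting of a center vertex adjacent to k leaves, then μ_int(K_1 ⊙ H) ≤ 2, where K_1 ⊙ H is the graph obtained from H by adding a single new universal vertex adjacent to every vertex of H. -/
/-!
Number the universal vertex `0`, the centre of the star `1` and the leaves `2, …, k + 1`, and
colour the edge `uv` with `⌊u/2⌋ + ⌊v/2⌋`. At a vertex `w` a colour class is contained in a
fibre of `⌊·/2⌋` (shifted by `⌊w/2⌋`), and the numbering is injective, so it has at most two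
elements. Since `⌊0/2⌋ = ⌊1/2⌋`, the universal vertex and the centre each see the colours
`⌊n/2⌋` for all `n ∈ [0, k + 2)`, an interval; a leaf sees the single colour of its
two edges.
-/

open Function

theorem Set.OrdConnected.image_ediv {S : Set ℤ} (hS : S.OrdConnected) {d : ℤ} (hd : 0 < d) :
    ((· / d) '' S).OrdConnected := by
  refine ⟨?_⟩
  rintro _ ⟨s, hs, rfl⟩ _ ⟨t, ht, rfl⟩ x ⟨hsx, hxt⟩
  have hxt' : x * d ≤ t := (Int.le_ediv_iff_mul_le hd).1 hxt
  by_cases hxs : x * d ≤ s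
  · exact ⟨s, hs, le_antisymm hsx ((Int.le_ediv_iff_mul_le hd).2 hxs)⟩
  · exact ⟨d * x, hS.out hs ht ⟨by linarith, by linarith⟩, Int.mul_ediv_cancel_left x hd.ne'⟩

theorem Set.ncard_preimage_ediv_le {V : Type*} {p : V → ℤ} (hp : Injective p) {d : ℤ}
    (hd : 0 < d) (r : ℤ) : ((· / d) ∘ p ⁻¹' {r}).ncard ≤ d.toNat := by
  have hmaps : ∀ v ∈ (· / d) ∘ p ⁻¹' {r}, p v ∈ Set.Ico (d * r) (d * r + d) := by
    rintro v rfl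
    exact ⟨Int.mul_ediv_self_le hd.ne', Int.lt_mul_ediv_self_add hd⟩
  calc _ ≤ (Set.Ico (d * r) (d * r + d)).ncard :=
        Set.ncard_le_ncard_of_injOn p hmaps hp.injOn (Set.finite_Ico _ _)
    _ = d.toNat := by
        rw [← Finset.coe_Ico, Set.ncard_coe_finset, Int.card_Ico, add_sub_cancel_left]

section SumColoring

variable {V : Type*} {G : SimpleGraph V}

def sumColoring (w : V → ℤ) : Sym2 V → ℤ :=
  Sym2.lift ⟨fun x y => w x + w y, fun _ _ => add_comm _ _⟩

@[simp]
theorem sumColoring_mk (w : V → ℤ) (x y : V) : sumColoring w s(x, y) = w x + w y := rfl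

theorem isIntervalColoring_sumColoring {w : V → ℤ}
    (hw : ∀ v, (w '' G.neighborSet v).OrdConnected) : IsIntervalColoring G (sumColoring w) := by
  rintro v _ _ x ⟨a, ha, rfl⟩ ⟨b, hb, rfl⟩ hax hxb
  rw [sumColoring_mk] at hax hxb
  obtain ⟨u, hu, hwu⟩ := (hw v).out ⟨a, ha, rfl⟩ ⟨b, hb, rfl⟩
    (⟨by linarith, by linarith⟩ : x - w v ∈ Set.Icc (w a) (w b))
  exact ⟨u, hu, by rw [sumColoring_mk, hwu, add_sub_cancel]⟩

theorem isKImproper_sumColoring [Finite V] {w : V → ℤ} {k : ℕ}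
    (hw : ∀ r, (w ⁻¹' {r}).ncard ≤ k) : IsKImproper G (sumColoring w) k := by
  intro v q
  refine le_trans (Set.ncard_le_ncard ?_ (Set.toFinite _)) (hw (q - w v))
  rintro u ⟨-, rfl⟩
  simp

end SumColoring

theorem impropriety_le_of_coloring {V : Type*} {G : SimpleGraph V} {c : Sym2 V → ℤ} {k : ℕ}
    (hint : IsIntervalColoring G c) (himp : IsKImproper G c k) : impropriety G ≤ k :=
  Nat.sInf_le ⟨c, hint, himp⟩

section CoronaStar

variable {k : ℕ}

def coronaStarIndex : Fin 1 ⊕ Fin 1 × (Fin 1 ⊕ Fin k) → ℤ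
  | .inl _ => 0
  | .inr (_, .inl _) => 1
  | .inr (_, .inr i) => i + 2

theorem coronaStarIndex_injective : Injective (coronaStarIndex (k := k)) := by
  rintro (a | ⟨a, b | i⟩) (a' | ⟨a', b' | i'⟩) h <;>
    simp [coronaStarIndex, Fin.fin_one_eq_zero, Fin.ext_iff] at h ⊢ <;> omega

theorem range_coronaStarIndex :
    Set.range (coronaStarIndex (k := k)) = Set.Ico 0 ((k : ℤ) + 2) := by
  ext n
  constructor
  · rintro ⟨_ | ⟨_, _ | i⟩, rfl⟩ <;> simp only [coronaStarIndex, Set.mem_Ico] <;> omega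
  · rintro ⟨hn0, hnk⟩
    obtain rfl | rfl | hn2 : n = 0 ∨ n = 1 ∨ 2 ≤ n := by omega
    · exact ⟨.inl 0, rfl⟩
    · exact ⟨.inr (0, .inl 0), rfl⟩
    · exact ⟨.inr (0, .inr ⟨(n - 2).toNat, by omega⟩), by simp [coronaStarIndex]; omega⟩

theorem ordConnected_image_neighborSet_coronaStar (v : Fin 1 ⊕ Fin 1 × (Fin 1 ⊕ Fin k)) :
    ((· / 2) ∘ coronaStarIndex ''
      (corona ⊥ (completeBipartiteGraph (Fin 1) (Fin k))).neighborSet v).OrdConnected := by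
  have hrange : (Set.range ((· / 2) ∘ coronaStarIndex (k := k))).OrdConnected := by
    rw [Set.range_comp, range_coronaStarIndex]
    exact Set.ordConnected_Ico.image_ediv two_pos
  rcases v with a | ⟨a, b | i⟩
  · convert hrange using 1
    refine (Set.image_subset_range _ _).antisymm ?_
    rintro _ ⟨x | ⟨x, y | j⟩, rfl⟩
    · exact ⟨.inr (0, .inl 0), by simp [corona, Fin.fin_one_eq_zero], rfl⟩
    · exact ⟨.inr (0, .inl 0), by simp [corona, Fin.fin_one_eq_zero], by simp [coronaStarIndex]⟩
    · exact ⟨.inr (0, .inr j), by simp [corona, Fin.fin_one_eq_zero], by simp [coronaStarIndex]⟩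
  · convert hrange using 1
    refine (Set.image_subset_range _ _).antisymm ?_
    rintro _ ⟨x | ⟨x, y | j⟩, rfl⟩
    · exact ⟨.inl 0, by simp [corona, Fin.fin_one_eq_zero], rfl⟩
    · exact ⟨.inl 0, by simp [corona, Fin.fin_one_eq_zero], by simp [coronaStarIndex]⟩
    · exact ⟨.inr (0, .inr j), by simp [corona, completeBipartiteGraph, Fin.fin_one_eq_zero],
        by simp [coronaStarIndex]⟩
  · convert Set.ordConnected_singleton (a := (0 : ℤ))
    ext r
    simp [corona, coronaStarIndex, Fin.fin_one_eq_zero, @eq_comm _ (0 : ℤ)]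

end CoronaStar

theorem stmt10_general (k : ℕ) :
    impropriety (corona (⊥ : SimpleGraph (Fin 1))
      (completeBipartiteGraph (Fin 1) (Fin k))) ≤ 2 :=
  impropriety_le_of_coloring
    (isIntervalColoring_sumColoring ordConnected_image_neighborSet_coronaStar)
    (isKImproper_sumColoring (Set.ncard_preimage_ediv_le coronaStarIndex_injective two_pos))

/-- For every `k ≥ 1`, the corona product `K_1 ⊙ S_k`, where `S_k = K_{1,k}` is
the star with `k` leaves, satisfies `μ_int(K_1 ⊙ S_k) ≤ 2`. -/
theorem stmt10 (k : ℕ) (hk : 1 ≤ k) :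
    impropriety (corona (⊥ : SimpleGraph (Fin 1))
      (completeBipartiteGraph (Fin 1) (Fin k))) ≤ 2 :=
  stmt10_general k
end

section
/- The corona product C_3 ⊙ P_2 of the triangle C_3 with the path P_2 on two vertices satisfies μ_int(C_3 ⊙ P_2) = 2; in particular, C_3 ⊙ P_2 admits no interval edge coloring, but it admits a 2-improper interval edge coloring. -/
/-- The corona product `C_3 ⊙ P_2` of the triangle with the path on two
vertices. -/
abbrev C3P2 : SimpleGraph (Fin 3 ⊕ Fin 3 × Fin 2) :=
  corona (SimpleGraph.cycleGraph 3) (SimpleGraph.pathGraph 2)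

/-!
Coloring the spokes of the corona `2` and all other edges `1` is a 2-improper interval coloring.

In a proper interval coloring the `d` colors at a vertex of degree `d` are `d` consecutive
integers. At the two vertices of the copy of `P_2` attached to `v_i` this forces the two spoke
colors at `v_i` to differ by `2`; since the four colors at `v_i` are `m, …, m + 3`, its two
triangle edges then also differ by `2`. Going once around the triangle the color would change
by three steps of `±2`, which cannot add up to zero.
-/

open SimpleGraph Finset

section IntervalColoring

variable {V : Type*} {G : SimpleGraph V} {c : Sym2 V → ℤ}

lemma IsKImproper.mono {k l : ℕ} (hc : IsKImproper G c k) (hkl : k ≤ l) : IsKImproper G c l :=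
  fun v q => (hc v q).trans hkl

lemma impropriety_eq_succ {k : ℕ} (hk : ∃ c, IsIntervalColoring G c ∧ IsKImproper G c (k + 1))
    (hk' : ¬ ∃ c, IsIntervalColoring G c ∧ IsKImproper G c k) : impropriety G = k + 1 := by
  refine le_antisymm (Nat.sInf_le hk) (le_csInf ⟨_, hk⟩ ?_)
  rintro j ⟨c, hc, hj⟩
  by_contra! hjk
  exact hk' ⟨c, hc, hj.mono (Nat.le_of_lt_succ hjk)⟩

lemma isIntervalColoring_of_forall_eq_or_eq_add_one {k : ℤ} (h : ∀ e, c e = k ∨ c e = k + 1) :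
    IsIntervalColoring G c := by
  rintro v a b x ⟨u, hu, rfl⟩ ⟨w, hw, rfl⟩ hax hxb
  obtain rfl | rfl : x = c s(v, u) ∨ x = c s(v, w) := by
    rcases h s(v, u) with h₁ | h₁ <;> rcases h s(v, w) with h₂ | h₂ <;> omega
  exacts [⟨u, hu, rfl⟩, ⟨w, hw, rfl⟩]

lemma IsIntervalColoring.sub_lt_card (hc : IsIntervalColoring G c) {v u w : V} {F : Finset ℤ}
    (hF : ∀ x, G.Adj v x → c s(v, x) ∈ F) (hu : G.Adj v u) (hw : G.Adj v w) :
    c s(v, w) - c s(v, u) < #F := by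
  have hsub : Icc (c s(v, u)) (c s(v, w)) ⊆ F := fun x hx => by
    obtain ⟨y, hy, rfl⟩ := hc v _ _ x ⟨u, hu, rfl⟩ ⟨w, hw, rfl⟩ (mem_Icc.1 hx).1 (mem_Icc.1 hx).2
    exact hF y hy
  have := card_le_card hsub
  rw [Int.card_Icc] at this
  omega

lemma IsIntervalColoring.exists_window (hc : IsIntervalColoring G c) {v : V} {F : Finset ℤ}
    (hF : ∀ x, G.Adj v x → c s(v, x) ∈ F) :
    ∃ m : ℤ, ∀ x, G.Adj v x → c s(v, x) ∈ Ico m (m + #F) := by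
  classical
  set S := F.filter fun y => ∃ u, G.Adj v u ∧ c s(v, u) = y
  have hS : ∀ x, G.Adj v x → c s(v, x) ∈ S := fun x hx => mem_filter.2 ⟨hF x hx, x, hx, rfl⟩
  by_cases hne : S.Nonempty
  · obtain ⟨u, hu, hmu⟩ := (mem_filter.1 (S.min'_mem hne)).2
    refine ⟨S.min' hne, fun x hx => mem_Ico.2 ⟨S.min'_le _ (hS x hx), ?_⟩⟩
    have := hc.sub_lt_card hF hu hx
    omega
  · exact ⟨0, fun x hx => absurd ⟨_, hS x hx⟩ hne⟩

lemma IsKImproper.color_ne [Finite V] (hc : IsKImproper G c 1) {v u w : V} (hu : G.Adj v u)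
    (hw : G.Adj v w) (huw : u ≠ w) : c s(v, u) ≠ c s(v, w) := by
  intro h
  have hsub : {u, w} ⊆ {x | G.Adj v x ∧ c s(v, x) = c s(v, w)} := by
    rintro x (rfl | rfl)
    exacts [⟨hu, h⟩, ⟨hw, rfl⟩]
  have := (Set.ncard_le_ncard hsub (Set.toFinite _)).trans (hc v _)
  rw [Set.ncard_pair huw] at this
  omega

lemma IsIntervalColoring.eq_add_one_or_of_forall_adj [Finite V] (hc : IsIntervalColoring G c)
    (h1 : IsKImproper G c 1) {v a b : V} (ha : G.Adj v a) (hb : G.Adj v b) (hab : a ≠ b)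
    (hN : ∀ x, G.Adj v x → x = a ∨ x = b) :
    c s(v, a) = c s(v, b) + 1 ∨ c s(v, b) = c s(v, a) + 1 := by
  obtain ⟨m, hm⟩ := hc.exists_window (F := {c s(v, a), c s(v, b)}) fun x hx => by
    rcases hN x hx with rfl | rfl <;> simp
  have := mem_Ico.1 (hm a ha)
  have := mem_Ico.1 (hm b hb)
  have := card_le_two (a := c s(v, a)) (b := c s(v, b))
  have := h1.color_ne ha hb hab
  omega

lemma isKImproper_of_card_filter_le [Fintype V] [DecidableRel G.Adj] {k : ℕ}
    (h : ∀ v u, G.Adj v u → #{w | G.Adj v w ∧ c s(v, w) = c s(v, u)} ≤ k) :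
    IsKImproper G c k := by
  intro v q
  by_cases hq : ∃ u, G.Adj v u ∧ c s(v, u) = q
  · obtain ⟨u, hu, rfl⟩ := hq
    simpa [← Set.ncard_coe_finset] using h v u hu
  · have : {u | G.Adj v u ∧ c s(v, u) = q} = ∅ :=
      Set.eq_empty_of_forall_notMem fun u hu => hq ⟨u, hu⟩
    simp [this]

end IntervalColoring

instance SimpleGraph.pathGraph.decidableRelAdj (n : ℕ) : DecidableRel (pathGraph n).Adj :=
  fun _ _ => decidable_of_iff _ pathGraph_adj.symm

section Corona

variable {V W : Type*} {G : SimpleGraph V} {H : SimpleGraph W}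

instance corona.decidableRelAdj [DecidableEq V] [DecidableRel G.Adj] [DecidableRel H.Adj] :
    DecidableRel (corona G H).Adj
  | Sum.inl u, Sum.inl v => inferInstanceAs (Decidable (G.Adj u v))
  | Sum.inl u, Sum.inr p => inferInstanceAs (Decidable (u = p.1))
  | Sum.inr p, Sum.inl u => inferInstanceAs (Decidable (u = p.1))
  | Sum.inr p, Sum.inr q => inferInstanceAs (Decidable (p.1 = q.1 ∧ H.Adj p.2 q.2))

def coronaSpokeColoring : Sym2 (V ⊕ V × W) → ℤ :=
  Sym2.lift ⟨fun x y => if x.isLeft = y.isLeft then 1 else 2, fun _ _ => by simp only [eq_comm]⟩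

lemma isIntervalColoring_coronaSpokeColoring :
    IsIntervalColoring (corona G H) coronaSpokeColoring :=
  isIntervalColoring_of_forall_eq_or_eq_add_one (k := 1) fun e => by
    induction e using Sym2.ind
    simp only [coronaSpokeColoring, Sym2.lift_mk]
    split_ifs <;> simp

end Corona

section C3P2

open Sum

lemma C3P2.isKImproper_two_coronaSpokeColoring : IsKImproper C3P2 coronaSpokeColoring 2 :=
  isKImproper_of_card_filter_le (by decide)

lemma C3P2.adj_inl_iff : ∀ (i : Fin 3) (u : Fin 3 ⊕ Fin 3 × Fin 2), C3P2.Adj (inl i) u ↔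
    u = inl (i + 1) ∨ u = inl (i + 2) ∨ u = inr (i, 0) ∨ u = inr (i, 1) := by
  decide

lemma C3P2.adj_inr_iff : ∀ (i : Fin 3) (j : Fin 2) (u : Fin 3 ⊕ Fin 3 × Fin 2),
    C3P2.Adj (inr (i, j)) u ↔ u = inl i ∨ u = inr (i, j + 1) := by
  decide

variable {c : Sym2 (Fin 3 ⊕ Fin 3 × Fin 2) → ℤ}

lemma C3P2.pendant_colors (hc : IsIntervalColoring C3P2 c) (h1 : IsKImproper C3P2 c 1)
    (i : Fin 3) :
    c s(inl i, inr (i, 0)) = c s(inl i, inr (i, 1)) + 2 ∨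
      c s(inl i, inr (i, 1)) = c s(inl i, inr (i, 0)) + 2 := by
  have hP : ∀ j : Fin 2, c s(inr (i, j), inl i) = c s(inr (i, j), inr (i, j + 1)) + 1 ∨
      c s(inr (i, j), inr (i, j + 1)) = c s(inr (i, j), inl i) + 1 := fun j =>
    hc.eq_add_one_or_of_forall_adj h1 ((C3P2.adj_inr_iff i j _).2 (Or.inl rfl))
      ((C3P2.adj_inr_iff i j _).2 (Or.inr rfl)) (by simp) (C3P2.adj_inr_iff i j · |>.1)
  have h₀ := hP 0
  have h₁ := hP 1
  have hne := h1.color_ne ((C3P2.adj_inl_iff i (inr (i, 0))).2 (by simp))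
    ((C3P2.adj_inl_iff i (inr (i, 1))).2 (by simp)) (by simp)
  simp only [Fin.isValue, Fin.reduceAdd, Sym2.eq_swap] at h₀ h₁ hne ⊢
  omega

lemma C3P2.triangle_colors (hc : IsIntervalColoring C3P2 c) (h1 : IsKImproper C3P2 c 1)
    (i : Fin 3) :
    c s(inl i, inl (i + 1)) = c s(inl i, inl (i + 2)) + 2 ∨
      c s(inl i, inl (i + 2)) = c s(inl i, inl (i + 1)) + 2 := by
  have adj := fun u hu => (C3P2.adj_inl_iff i u).2 hu
  have ha := adj (inl (i + 1)) (by simp)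
  have hb := adj (inl (i + 2)) (by simp)
  have hp := adj (inr (i, 0)) (by simp)
  have hq := adj (inr (i, 1)) (by simp)
  obtain ⟨m, hm⟩ := hc.exists_window (F := {c s(inl i, inl (i + 1)), c s(inl i, inl (i + 2)),
      c s(inl i, inr (i, 0)), c s(inl i, inr (i, 1))}) fun x hx => by
    rcases (C3P2.adj_inl_iff i x).1 hx with rfl | rfl | rfl | rfl <;> simp
  have := card_le_four (a := c s(inl i, inl (i + 1))) (b := c s(inl i, inl (i + 2)))
    (c := c s(inl i, inr (i, 0))) (d := c s(inl i, inr (i, 1)))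
  have := mem_Ico.1 (hm _ ha)
  have := mem_Ico.1 (hm _ hb)
  have := mem_Ico.1 (hm _ hp)
  have := mem_Ico.1 (hm _ hq)
  have := h1.color_ne ha hb (by simp)
  have := h1.color_ne ha hp (by simp)
  have := h1.color_ne ha hq (by simp)
  have := h1.color_ne hb hp (by simp)
  have := h1.color_ne hb hq (by simp)
  have := C3P2.pendant_colors hc h1 i
  omega

lemma C3P2.not_exists_isIntervalColoring_isKImproper_one :
    ¬ ∃ c, IsIntervalColoring C3P2 c ∧ IsKImproper C3P2 c 1 := by
  rintro ⟨c, hc, h1⟩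
  have t₀ := C3P2.triangle_colors hc h1 0
  have t₁ := C3P2.triangle_colors hc h1 1
  have t₂ := C3P2.triangle_colors hc h1 2
  -- `Sym2.eq_swap` orients every edge the same way, so that `omega` sees one atom per edge
  simp only [Fin.isValue, Fin.reduceAdd, Sym2.eq_swap] at t₀ t₁ t₂
  omega

end C3P2

/-- `μ_int(C_3 ⊙ P_2) = 2`; in particular `C_3 ⊙ P_2` admits no (1-improper)
interval edge coloring, but it does admit a 2-improper interval edge coloring. -/
theorem stmt19 :
    impropriety C3P2 = 2 ∧
    (¬ ∃ c : Sym2 (Fin 3 ⊕ Fin 3 × Fin 2) → ℤ,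
        IsIntervalColoring C3P2 c ∧ IsKImproper C3P2 c 1) ∧
    (∃ c : Sym2 (Fin 3 ⊕ Fin 3 × Fin 2) → ℤ,
        IsIntervalColoring C3P2 c ∧ IsKImproper C3P2 c 2) := by
  have h2 : ∃ c, IsIntervalColoring C3P2 c ∧ IsKImproper C3P2 c 2 :=
    ⟨coronaSpokeColoring, isIntervalColoring_coronaSpokeColoring,
      C3P2.isKImproper_two_coronaSpokeColoring⟩
  exact ⟨impropriety_eq_succ h2 C3P2.not_exists_isIntervalColoring_isKImproper_one,
    C3P2.not_exists_isIntervalColoring_isKImproper_one, h2⟩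
end
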